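/- arXiv:1501.01913 — 2 statements merged into one kernel-verified Lean document; each statement's English description precedes it below -/
import Mathlib

section
/- Let 𝔥 be a clonable family of r-graphs. If a family 𝔉 of r-graphs is 𝔥-locally stable and 𝔥-weight stable, then 𝔉 is 𝔥-stable. -/
open Filter

namespace TuranGT

/-- An `r`-graph: an `r`-uniform hypergraph with vertex set `{0, ..., n-1} ⊆ ℕ`. -/
structure RGraph (r : ℕ) where
  n : ℕ
  edges : Finset (Finset ℕ)
  uniform : ∀ e ∈ edges, e.card = r
  valid : ∀ e ∈ edges, ∀ v ∈ e, v < n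

variable {r : ℕ}

/-- The link of a vertex `v`: the set of `(r-1)`-sets `I` with `I ∪ {v}` an edge. -/
def link (F : RGraph r) (v : ℕ) : Finset (Finset ℕ) :=
  (F.edges.filter fun e => v ∈ e).image fun e => e.erase v

/-- `G` contains a copy of `H` as a subgraph. -/
def ContainsCopy (G H : RGraph r) : Prop :=
  ∃ f : ℕ → ℕ, Set.InjOn f (Set.Iio H.n) ∧ (∀ v < H.n, f v < G.n) ∧
    ∀ e ∈ H.edges, e.image f ∈ G.edges

/-- `G` is `𝔉`-free: it contains no member of `𝔉` as a subgraph. -/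
def FreeFam (𝔉 : Set (RGraph r)) (G : RGraph r) : Prop :=
  ∀ H ∈ 𝔉, ¬ ContainsCopy G H

/-- The Turán number `ex(n, 𝔉)`. -/
noncomputable def exNum (r n : ℕ) (𝔉 : Set (RGraph r)) : ℕ :=
  sSup {k | ∃ G : RGraph r, G.n = n ∧ FreeFam 𝔉 G ∧ G.edges.card = k}

/-- `φ` witnesses that `G` is a blowup of `F`: fibers of `φ` form a blowup partition. -/
def IsBlowupMap (F G : RGraph r) (φ : ℕ → ℕ) : Prop :=
  (∀ v < G.n, φ v < F.n) ∧
    ∀ e : Finset ℕ, e ∈ G.edges ↔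
      ((∀ v ∈ e, v < G.n) ∧ Set.InjOn φ (e : Set ℕ) ∧ e.image φ ∈ F.edges)

/-- `G` is (isomorphic to) a blowup of `F` (cloning and deleting vertices). -/
def IsBlowup (F G : RGraph r) : Prop := ∃ φ : ℕ → ℕ, IsBlowupMap F G φ

/-- The family `𝔅(S)` of all blowups of `S`. -/
def blowupFam (S : RGraph r) : Set (RGraph r) := {G | IsBlowup S G}

/-- A family is clonable if it is closed under taking blowups. -/
def Clonable (𝔉 : Set (RGraph r)) : Prop :=
  ∀ F ∈ 𝔉, ∀ G : RGraph r, IsBlowup F G → G ∈ 𝔉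

/-- `m(𝔉, n)`: maximum number of edges of an `n`-vertex member of `𝔉`. -/
noncomputable def mFam (𝔉 : Set (RGraph r)) (n : ℕ) : ℕ :=
  sSup {k | ∃ F ∈ 𝔉, F.n = n ∧ F.edges.card = k}

/-- `m(𝔉) = lim_{n → ∞} m(𝔉, n)/n^r` (when the family is smooth). -/
noncomputable def mDen (𝔉 : Set (RGraph r)) : ℝ :=
  limUnder atTop fun n : ℕ => (mFam 𝔉 n : ℝ) / (n : ℝ) ^ r

/-- The edit distance `d_𝔥(F)` from `F` to the family `𝔥`. -/
noncomputable def distFam (𝔥 : Set (RGraph r)) (F : RGraph r) : ℝ :=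
  sInf {x : ℝ | ∃ H ∈ 𝔥, H.n = F.n ∧ x = ((symmDiff F.edges H.edges).card : ℝ)}

/-- `μ` is a probability distribution on the vertex set of `F`. -/
def IsWeight (F : RGraph r) (μ : ℕ → ℝ) : Prop :=
  (∀ v, 0 ≤ μ v) ∧ (∀ v, F.n ≤ v → μ v = 0) ∧ ∑ v ∈ Finset.range F.n, μ v = 1

/-- Weighted density `λ(F, μ)`. -/
noncomputable def lamW (F : RGraph r) (μ : ℕ → ℝ) : ℝ :=
  ∑ e ∈ F.edges, ∏ v ∈ e, μ v

/-- The Lagrangian `λ(F)`. -/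
noncomputable def lagrangian (F : RGraph r) : ℝ :=
  sSup {x : ℝ | ∃ μ, IsWeight F μ ∧ x = lamW F μ}

/-- `λ(𝔥)` for a family of r-graphs. -/
noncomputable def lamFam (𝔥 : Set (RGraph r)) : ℝ :=
  sSup {x : ℝ | ∃ H ∈ 𝔥, ∃ μ, IsWeight H μ ∧ x = lamW H μ}

/-- The uniform distribution `ξ_F`. -/
noncomputable def uniformW (F : RGraph r) : ℕ → ℝ :=
  fun v => if v < F.n then ((F.n : ℝ))⁻¹ else 0

/-- `(G, ν)` is a blowup of the weighted graph `(F, μ)`. -/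
def WIsBlowup (F : RGraph r) (μ : ℕ → ℝ) (G : RGraph r) (ν : ℕ → ℝ) : Prop :=
  IsWeight G ν ∧ ∃ φ : ℕ → ℕ, IsBlowupMap F G φ ∧
    ∀ i < F.n, μ i = ∑ v ∈ (Finset.range G.n).filter (fun v => φ v = i), ν v

/-- `d'(F1, F2, μ)` for graphs on a common vertex set. -/
noncomputable def dPrime (E1 E2 : Finset (Finset ℕ)) (μ : ℕ → ℝ) : ℝ :=
  ∑ e ∈ symmDiff E1 E2, ∏ v ∈ e, μ v

/-- The distance between weighted `r`-graphs. -/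
noncomputable def wDist (F1 : RGraph r) (μ1 : ℕ → ℝ) (F2 : RGraph r) (μ2 : ℕ → ℝ) : ℝ :=
  sInf {x : ℝ | ∃ (G1 G2 : RGraph r) (ν : ℕ → ℝ), G1.n = G2.n ∧
    WIsBlowup F1 μ1 G1 ν ∧ WIsBlowup F2 μ2 G2 ν ∧ x = dPrime G1.edges G2.edges ν}

/-- The weighted distance `d^w_𝔥(F, μ)` from a weighted graph to a family. -/
noncomputable def wDistFam (𝔥 : Set (RGraph r)) (F : RGraph r) (μ : ℕ → ℝ) : ℝ :=
  sInf {x : ℝ | ∃ H ∈ 𝔥, ∃ ν, IsWeight H ν ∧ x = wDist F μ H ν}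

/-- `𝔉` is `(𝔥, ε, α)`-locally stable. -/
def LocallyStable (𝔉 𝔥 : Set (RGraph r)) (ε α : ℝ) : Prop :=
  ∃ n0 : ℕ, ∀ F ∈ 𝔉, n0 ≤ F.n → distFam 𝔥 F ≤ ε * (F.n : ℝ) ^ r →
    (F.edges.card : ℝ) ≤ (mFam 𝔥 F.n : ℝ) - α * distFam 𝔥 F

/-- `𝔉` is `𝔥`-locally stable. -/
def HLocallyStable (𝔉 𝔥 : Set (RGraph r)) : Prop :=
  ∃ ε > (0 : ℝ), ∃ α > (0 : ℝ), LocallyStable 𝔉 𝔥 ε α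

/-- `𝔉` is `𝔥`-stable, i.e. `(𝔥, 1, α)`-locally stable for some `α > 0`. -/
def HStable (𝔉 𝔥 : Set (RGraph r)) : Prop :=
  ∃ α > (0 : ℝ), LocallyStable 𝔉 𝔥 1 α

/-- `𝔉` is `(𝔥, ε, α)`-vertex locally stable. -/
def VertexLocallyStable (𝔉 𝔥 : Set (RGraph r)) (ε α : ℝ) : Prop :=
  ∃ n0 : ℕ, ∀ F ∈ 𝔉, n0 ≤ F.n → distFam 𝔥 F ≤ ε * (F.n : ℝ) ^ r →
    (∀ v < F.n, ((r : ℝ) * mDen 𝔥 - ε) * (F.n : ℝ) ^ (r - 1) ≤ ((link F v).card : ℝ)) →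
    (F.edges.card : ℝ) ≤ (mFam 𝔥 F.n : ℝ) - α * distFam 𝔥 F

/-- `𝔉` is `𝔥`-vertex locally stable. -/
def HVertexLocallyStable (𝔉 𝔥 : Set (RGraph r)) : Prop :=
  ∃ ε > (0 : ℝ), ∃ α > (0 : ℝ), VertexLocallyStable 𝔉 𝔥 ε α

/-- `𝔉` is `(𝔥, ε, α)`-weight locally stable. -/
def WeightLocallyStable (𝔉 𝔥 : Set (RGraph r)) (ε α : ℝ) : Prop :=
  ∀ F ∈ 𝔉, ∀ μ : ℕ → ℝ, IsWeight F μ → wDistFam 𝔥 F μ ≤ ε →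
    lamW F μ ≤ lamFam 𝔥 - α * wDistFam 𝔥 F μ

/-- `𝔉` is `𝔥`-weight locally stable. -/
def HWeightLocallyStable (𝔉 𝔥 : Set (RGraph r)) : Prop :=
  ∃ ε > (0 : ℝ), ∃ α > (0 : ℝ), WeightLocallyStable 𝔉 𝔥 ε α

/-- `𝔉` is `𝔥`-weight stable: `(𝔥, 1, α)`-weight locally stable for some `α > 0`. -/
def HWeightStable (𝔉 𝔥 : Set (RGraph r)) : Prop :=
  ∃ α > (0 : ℝ), WeightLocallyStable 𝔉 𝔥 1 α

/-- `𝔉` is `𝔥`-weakly weight stable. -/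
def WeaklyWeightStable (𝔉 𝔥 : Set (RGraph r)) : Prop :=
  ∀ ε > (0 : ℝ), ∃ δ > (0 : ℝ), ∀ F ∈ 𝔉, ∀ μ : ℕ → ℝ, IsWeight F μ →
    lamFam 𝔥 - δ ≤ lamW F μ → wDistFam 𝔥 F μ ≤ ε

/-- The generalized triangle `T_r` on vertex set `{0, ..., 2r-2}` (for `r ≥ 2`),
with edges `D1 = {0,...,r-1}`, `D2 = {0,...,r-2} ∪ {r}`, `D3 = {r-1, r, ..., 2r-2}`. -/
def genTriangle (r : ℕ) : RGraph r where
  n := 2 * r - 1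
  edges :=
    if _h : 2 ≤ r then
      {Finset.range r, insert r (Finset.range (r - 1)), Finset.Ico (r - 1) (2 * r - 1)}
    else ∅
  uniform := by
    intro e he
    split_ifs at he with h
    · simp only [Finset.mem_insert, Finset.mem_singleton] at he
      rcases he with rfl | rfl | rfl
      · exact Finset.card_range r
      · rw [Finset.card_insert_of_notMem (by simp only [Finset.mem_range]; omega),
          Finset.card_range]
        omega
      · rw [Nat.card_Ico]
        omega
    · simp at he
  valid := by
    intro e he v hv
    split_ifs at he with h
    · simp only [Finset.mem_insert, Finset.mem_singleton] at he
      rcases he with rfl | rfl | rfl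
      · simp only [Finset.mem_range] at hv; omega
      · simp only [Finset.mem_insert, Finset.mem_range] at hv; omega
      · simp only [Finset.mem_Ico] at hv; omega
    · simp at he

/-- The family `Σ_r`: all `r`-graphs with three edges `D1, D2, D3` such that
`|D1 ∩ D2| = r - 1` and `D1 △ D2 ⊆ D3`. -/
def SigmaFam (r : ℕ) : Set (RGraph r) :=
  {G | ∃ D1 D2 D3 : Finset ℕ, G.edges = {D1, D2, D3} ∧
    D1 ≠ D2 ∧ D1 ≠ D3 ∧ D2 ≠ D3 ∧
    (D1 ∩ D2).card = r - 1 ∧ symmDiff D1 D2 ⊆ D3}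

/-- The complete graph `K_t` as a `2`-graph. -/
def completeGraph (t : ℕ) : RGraph 2 where
  n := t
  edges := Finset.powersetCard 2 (Finset.range t)
  uniform := fun _e he => (Finset.mem_powersetCard.1 he).2
  valid := fun _e he v hv => Finset.mem_range.1 ((Finset.mem_powersetCard.1 he).1 hv)

/-- `S` is an `(m, r, r-1)` Steiner system: each `(r-1)`-subset of the vertex set
lies in exactly one edge. -/
def IsSteiner (m : ℕ) (S : RGraph r) : Prop :=
  S.n = m ∧ ∀ I : Finset ℕ, (∀ v ∈ I, v < S.n) → I.card = r - 1 →
    ∃! e, e ∈ S.edges ∧ I ⊆ e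

/-- `F` covers pairs: every two vertices lie in a common edge. -/
def CoversPairs (F : RGraph r) : Prop :=
  ∀ u < F.n, ∀ v < F.n, ∃ e ∈ F.edges, u ∈ e ∧ v ∈ e

/-- Isomorphism of `r`-graphs. -/
def Isomorphic (F G : RGraph r) : Prop :=
  F.n = G.n ∧ ∃ f : ℕ → ℕ, Set.InjOn f (Set.Iio F.n) ∧ (∀ v < F.n, f v < G.n) ∧
    ∀ e : Finset ℕ, e ∈ F.edges ↔ ((∀ v ∈ e, v < F.n) ∧ e.image f ∈ G.edges)

/-- The support of a weighting. -/
noncomputable def suppW (F : RGraph r) (μ : ℕ → ℝ) : Finset ℕ :=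
  (Finset.range F.n).filter fun v => μ v ≠ 0

/-- `G` is isomorphic to the subgraph of `F` induced on the vertex set `S`. -/
def IsIsoInduced (F : RGraph r) (S : Finset ℕ) (G : RGraph r) : Prop :=
  ∃ f : ℕ → ℕ, Set.InjOn f (Set.Iio G.n) ∧ (Finset.range G.n).image f = S ∧
    ∀ e : Finset ℕ, e ∈ G.edges ↔ ((∀ v ∈ e, v < G.n) ∧ e.image f ∈ F.edges)

/-- An `r`-graph is thin if every `(r-1)`-set lies in at most one edge. -/
def ThinG (F : RGraph r) : Prop :=
  ∀ I : Finset ℕ, I.card = r - 1 → ∀ e1 ∈ F.edges, ∀ e2 ∈ F.edges,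
    I ⊆ e1 → I ⊆ e2 → e1 = e2

/-- A Steiner system (or any graph) is balanced if its Lagrangian is attained by
the uniform distribution. -/
def Balanced (F : RGraph r) : Prop := lagrangian F = lamW F (uniformW F)

/-- `e(m, r) = C(m, r-1) / (r m^r)`. -/
noncomputable def eDen (m r : ℕ) : ℝ :=
  (m.choose (r - 1) : ℝ) / ((r : ℝ) * (m : ℝ) ^ r)

/-- `d(m, r) = C(m-1, r-2) / ((r-1) m^{r-1})`. -/
noncomputable def dDen (m r : ℕ) : ℝ :=
  ((m - 1).choose (r - 2) : ℝ) / (((r : ℝ) - 1) * (m : ℝ) ^ (r - 1))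

/-- `S` is uniquely dense around `Σ_r`: the uniform weighting of `S` strictly maximizes the
weighted density among weighted `Σ_r`-free `r`-graphs covering pairs. -/
def UniquelyDense (S : RGraph r) : Prop :=
  (∀ F : RGraph r, FreeFam (SigmaFam r) F → CoversPairs F → ∀ μ : ℕ → ℝ, IsWeight F μ →
    lamW F μ ≤ lamW S (uniformW S)) ∧
  ∀ F : RGraph r, FreeFam (SigmaFam r) F → CoversPairs F → ∀ μ : ℕ → ℝ, IsWeight F μ →
    lamW F μ = lamW S (uniformW S) → Isomorphic F S ∧ μ = uniformW F

/-!
If `d_𝔥(F) ≤ ε n^r`, local stability applies directly. Otherwise `(F, ξ_F)`, with `ξ_F` the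
uniform weighting, is at weighted distance at least `ε` from `𝔥`: given a common blowup of
`(F, ξ_F)` and a weighted `H ∈ 𝔥`, pick in each fibre over a vertex of `F` one vertex at random,
with probability proportional to its weight. The chosen vertices span a copy of `F` and a blowup
`H'` of `H` (which lies in `𝔥` by clonability), and the expected size of `F △ H'` is at most
`n^r` times the weighted distance of the two blowups. Weight stability then gives
`|F| ≤ (λ(𝔥) - α ε) n^r`, while blowing up a nearly optimal weighted member of `𝔥` gives
`m(𝔥, n) ≥ (λ(𝔥) - α ε / 2) n^r` for large `n`. As `d_𝔥(F) ≤ n^r`, this is enough.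
-/

open Finset

lemma IsWeight.one_le_n {F : RGraph r} {μ : ℕ → ℝ} (hμ : IsWeight F μ) : 1 ≤ F.n := by
  by_contra h
  have := hμ.2.2
  simp_all

lemma isWeight_uniformW {F : RGraph r} (hF : 1 ≤ F.n) : IsWeight F (uniformW F) := by
  simp only [IsWeight, uniformW]
  refine ⟨fun v => by split_ifs <;> positivity, fun v hv => if_neg (by omega), ?_⟩
  rw [sum_ite_of_true fun v hv => mem_range.1 hv, sum_const, card_range, nsmul_eq_mul]
  field_simp

lemma lamW_uniformW (F : RGraph r) :
    lamW F (uniformW F) = #F.edges / (F.n : ℝ) ^ r := by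
  have h : ∀ e ∈ F.edges, ∏ v ∈ e, uniformW F v = ((F.n : ℝ) ^ r)⁻¹ := fun e he => by
    unfold uniformW
    rw [prod_congr rfl fun v hv => if_pos (F.valid e he v hv), prod_const, F.uniform e he,
      inv_pow]
  rw [lamW, sum_congr rfl h, sum_const, nsmul_eq_mul, div_eq_mul_inv]

lemma sum_prod_le_pow_sum {α : Type*} [LinearOrder α] {k : ℕ} {E : Finset (Finset α)}
    {s : Finset α} (hE : ∀ e ∈ E, e ⊆ s ∧ e.card = k) {w : α → ℝ} (hw : ∀ v, 0 ≤ w v) :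
    ∑ e ∈ E, ∏ v ∈ e, w v ≤ (∑ v ∈ s, w v) ^ k := by
  let enum : E → Fin k → α := fun e => e.1.orderEmbOfFin (hE e.1 e.2).2
  have hprod (e : E) : ∏ v ∈ e.1, w v = ∏ i, w (enum e i) := by
    conv_lhs => rw [← map_orderEmbOfFin_univ e.1 (hE e.1 e.2).2]
    rw [prod_map]
    rfl
  have hinj : Function.Injective enum := fun e e' h => Subtype.ext <| by
    rw [← image_orderEmbOfFin_univ e.1 (hE e.1 e.2).2,
      ← image_orderEmbOfFin_univ e'.1 (hE e'.1 e'.2).2]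
    exact congrArg (image · univ) h
  calc ∑ e ∈ E, ∏ v ∈ e, w v = ∑ p ∈ E.attach.image enum, ∏ i, w (p i) := by
        rw [sum_image hinj.injOn, ← sum_attach]
        exact sum_congr rfl fun e _ => hprod e
    _ ≤ ∑ p ∈ Fintype.piFinset fun _ => s, ∏ i, w (p i) := by
        refine sum_le_sum_of_subset_of_nonneg ?_ fun p _ _ => prod_nonneg fun i _ => hw _
        simp only [subset_iff, mem_image, Fintype.mem_piFinset]
        rintro _ ⟨e, _, rfl⟩ i
        exact (hE e.1 e.2).1 (orderEmbOfFin_mem _ _ i)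
    _ = (∑ v ∈ s, w v) ^ k := (sum_pow' s w k).symm

lemma dPrime_nonneg (E₁ E₂ : Finset (Finset ℕ)) {w : ℕ → ℝ} (hw : ∀ v, 0 ≤ w v) :
    0 ≤ dPrime E₁ E₂ w :=
  sum_nonneg fun _ _ => prod_nonneg fun v _ => hw v

lemma RGraph.subset_range_and_card_of_mem_symmDiff {G₁ G₂ : RGraph r} (hn : G₁.n = G₂.n)
    {e : Finset ℕ} (he : e ∈ symmDiff G₁.edges G₂.edges) : e ⊆ range G₁.n ∧ e.card = r := by
  rcases mem_symmDiff.1 he with ⟨he, -⟩ | ⟨he, -⟩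
  · exact ⟨fun v hv => mem_range.2 (G₁.valid e he v hv), G₁.uniform e he⟩
  · exact ⟨fun v hv => mem_range.2 (hn ▸ G₂.valid e he v hv), G₂.uniform e he⟩

lemma dPrime_le_one {G₁ G₂ : RGraph r} (hn : G₁.n = G₂.n) {w : ℕ → ℝ} (hw : IsWeight G₁ w) :
    dPrime G₁.edges G₂.edges w ≤ 1 := by
  simpa [dPrime, hw.2.2] using
    sum_prod_le_pow_sum (fun e he => RGraph.subset_range_and_card_of_mem_symmDiff hn he) hw.1

lemma wDist_nonneg (F₁ : RGraph r) (μ₁ : ℕ → ℝ) (F₂ : RGraph r) (μ₂ : ℕ → ℝ) :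
    0 ≤ wDist F₁ μ₁ F₂ μ₂ :=
  Real.sInf_nonneg <| by
    rintro _ ⟨G₁, G₂, ν, -, hB, -, rfl⟩
    exact dPrime_nonneg _ _ hB.1.1

open scoped Classical in
noncomputable def RGraph.pullback (H : RGraph r) (n : ℕ) (φ : ℕ → ℕ) : RGraph r where
  n := n
  edges := (powersetCard r (range n)).filter fun e => Set.InjOn φ e ∧ e.image φ ∈ H.edges
  uniform _ he := (mem_powersetCard.1 (mem_filter.1 he).1).2
  valid _ he _ hv := mem_range.1 ((mem_powersetCard.1 (mem_filter.1 he).1).1 hv)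

lemma RGraph.mem_pullback_edges {H : RGraph r} {n : ℕ} {φ : ℕ → ℕ} {e : Finset ℕ} :
    e ∈ (H.pullback n φ).edges ↔ (∀ v ∈ e, v < n) ∧ Set.InjOn φ e ∧ e.image φ ∈ H.edges := by
  simp only [RGraph.pullback, mem_filter, mem_powersetCard, subset_iff, mem_range]
  constructor
  · rintro ⟨⟨hval, -⟩, hinj, hmem⟩
    exact ⟨hval, hinj, hmem⟩
  · rintro ⟨hval, hinj, hmem⟩
    exact ⟨⟨hval, by rw [← card_image_of_injOn hinj, H.uniform _ hmem]⟩, hinj, hmem⟩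

lemma RGraph.isBlowupMap_pullback {H : RGraph r} {n : ℕ} {φ : ℕ → ℕ}
    (hφ : ∀ v < n, φ v < H.n) : IsBlowupMap H (H.pullback n φ) φ :=
  ⟨hφ, fun _ => RGraph.mem_pullback_edges⟩

lemma Clonable.pullback_mem {𝔥 : Set (RGraph r)} (hc : Clonable 𝔥) {H : RGraph r} (hH : H ∈ 𝔥)
    {n : ℕ} {φ : ℕ → ℕ} (hφ : ∀ v < n, φ v < H.n) : H.pullback n φ ∈ 𝔥 :=
  hc H hH _ ⟨φ, RGraph.isBlowupMap_pullback hφ⟩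

lemma IsBlowupMap.image_mem_edges_iff {F G : RGraph r} {φ : ℕ → ℕ} (h : IsBlowupMap F G φ)
    {t : ℕ → ℕ} {e : Finset ℕ} (ht : ∀ v ∈ e, t v < G.n) (hinj : Set.InjOn t e) :
    e.image t ∈ G.edges ↔ Set.InjOn (φ ∘ t) e ∧ e.image (φ ∘ t) ∈ F.edges := by
  rw [h.2, ← image_image, coe_image]
  refine ⟨fun ⟨_, hφ, hmem⟩ => ⟨hφ.comp hinj (Set.mapsTo_image t _), hmem⟩,
    fun ⟨hφt, hmem⟩ => ⟨?_, hφt.image_of_comp, hmem⟩⟩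
  simp only [mem_image]
  rintro _ ⟨v, hv, rfl⟩
  exact ht v hv

section DivMod

variable {M : Type*} [AddCommMonoid M] {m n : ℕ}

lemma mul_add_lt_mul {i j : ℕ} (hi : i < n) (hj : j < m) : m * i + j < m * n :=
  calc m * i + j < m * (i + 1) := by rw [mul_add_one]; omega
    _ ≤ m * n := Nat.mul_le_mul_left m hi

lemma sum_filter_div_eq {i : ℕ} (hi : i < n) (f : ℕ → M) :
    ∑ v ∈ (range (m * n)).filter (· / m = i), f v = ∑ j ∈ range m, f (m * i + j) := by
  rcases Nat.eq_zero_or_pos m with rfl | hm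
  · simp
  refine sum_nbij' (· % m) (m * i + ·) (fun v _ => mem_range.2 (Nat.mod_lt v hm))
    (fun j hj => ?_) (fun v hv => ?_) (fun j hj => ?_) (fun v hv => ?_)
  · have hj := mem_range.1 hj
    simp [mul_add_lt_mul hi hj, Nat.mul_add_div hm, Nat.div_eq_of_lt hj]
  · rw [← (mem_filter.1 hv).2, Nat.div_add_mod]
  · simp [Nat.mod_eq_of_lt (mem_range.1 hj)]
  · rw [← (mem_filter.1 hv).2, Nat.div_add_mod]

lemma sum_filter_mod_eq {j : ℕ} (hj : j < m) (f : ℕ → M) :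
    ∑ v ∈ (range (m * n)).filter (· % m = j), f v = ∑ i ∈ range n, f (m * i + j) := by
  have hm : 0 < m := by omega
  refine sum_nbij' (· / m) (m * · + j) (fun v hv => ?_) (fun i hi => ?_) (fun v hv => ?_)
    (fun i _ => ?_) (fun v hv => ?_)
  · exact mem_range.2 ((Nat.div_lt_iff_lt_mul hm).2 (by
      rw [mul_comm]; exact mem_range.1 (mem_filter.1 hv).1))
  · simp [mul_add_lt_mul (mem_range.1 hi) hj, Nat.mod_eq_of_lt hj]
  · rw [← (mem_filter.1 hv).2, Nat.div_add_mod]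
  · simp [Nat.mul_add_div hm, Nat.div_eq_of_lt hj]
  · rw [← (mem_filter.1 hv).2, Nat.div_add_mod]

end DivMod

lemma exists_common_blowup {F H : RGraph r} {μ ν : ℕ → ℝ} (hμ : IsWeight F μ)
    (hν : IsWeight H ν) :
    ∃ (G₁ G₂ : RGraph r) (w : ℕ → ℝ), G₁.n = G₂.n ∧ WIsBlowup F μ G₁ w ∧ WIsBlowup H ν G₂ w := by
  -- the vertex `m * i + j` of the common blowup stands for the pair `(i, j) ∈ V(F) × V(H)`
  set m := H.n
  have hm : 0 < m := hν.one_le_n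
  let N := m * F.n
  let w : ℕ → ℝ := fun v => μ (v / m) * ν (v % m)
  have hw_apply {i j : ℕ} (hj : j < m) : w (m * i + j) = μ i * ν j := by
    simp only [w, Nat.mul_add_div hm, Nat.div_eq_of_lt hj, add_zero, Nat.mul_add_mod,
      Nat.mod_eq_of_lt hj]
  have hfib₁ : ∀ i < F.n, μ i = ∑ v ∈ (range N).filter (· / m = i), w v := fun i hi => by
    rw [sum_filter_div_eq hi, sum_congr rfl fun j hj => hw_apply (mem_range.1 hj), ← mul_sum,
      hν.2.2, mul_one]
  have hfib₂ : ∀ j < m, ν j = ∑ v ∈ (range N).filter (· % m = j), w v := fun j hj => by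
    rw [sum_filter_mod_eq hj, sum_congr rfl fun i _ => hw_apply hj, ← sum_mul, hμ.2.2, one_mul]
  have hdiv : ∀ v < N, v / m < F.n := fun v hv =>
    (Nat.div_lt_iff_lt_mul hm).2 (by rw [mul_comm]; exact hv)
  have hw (G : RGraph r) (hG : G.n = N) : IsWeight G w := by
    refine ⟨fun v => mul_nonneg (hμ.1 _) (hν.1 _), fun v hv => ?_, ?_⟩
    · have : F.n ≤ v / m :=
        (Nat.le_div_iff_mul_le hm).2 (by rw [mul_comm]; exact (hG.symm.trans_le hv : N ≤ v))
      simp [w, hμ.2.1 _ this]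
    · rw [hG, ← sum_fiberwise_of_maps_to fun v hv => mem_range.2 (hdiv v (mem_range.1 hv)),
        ← hμ.2.2]
      exact (sum_congr rfl fun i hi => hfib₁ i (mem_range.1 hi)).symm
  exact ⟨F.pullback N (· / m), H.pullback N (· % m), w, rfl,
    ⟨hw _ rfl, _, RGraph.isBlowupMap_pullback hdiv, hfib₁⟩,
    ⟨hw _ rfl, _, RGraph.isBlowupMap_pullback fun v _ => Nat.mod_lt v hm, hfib₂⟩⟩

lemma wDist_le_one {F H : RGraph r} {μ ν : ℕ → ℝ} (hμ : IsWeight F μ) (hν : IsWeight H ν) :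
    wDist F μ H ν ≤ 1 := by
  obtain ⟨G₁, G₂, w, hn, hB₁, hB₂⟩ := exists_common_blowup hμ hν
  calc wDist F μ H ν ≤ dPrime G₁.edges G₂.edges w :=
        csInf_le ⟨0, ?_⟩ ⟨G₁, G₂, w, hn, hB₁, hB₂, rfl⟩
    _ ≤ 1 := dPrime_le_one hn hB₁.1
  rintro _ ⟨G₁, G₂, ν, -, hB, -, rfl⟩
  exact dPrime_nonneg _ _ hB.1.1

lemma wDistFam_le_one (𝔥 : Set (RGraph r)) {F : RGraph r} {μ : ℕ → ℝ} (hμ : IsWeight F μ) :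
    wDistFam 𝔥 F μ ≤ 1 := by
  rcases Set.eq_empty_or_nonempty
    {x : ℝ | ∃ H ∈ 𝔥, ∃ ν, IsWeight H ν ∧ x = wDist F μ H ν} with h | ⟨_, H, hH, ν, hν, rfl⟩
  · rw [wDistFam, h, Real.sInf_empty]
    exact zero_le_one
  · calc wDistFam 𝔥 F μ ≤ wDist F μ H ν := csInf_le ⟨0, ?_⟩ ⟨H, hH, ν, hν, rfl⟩
      _ ≤ 1 := wDist_le_one hμ hν
    rintro _ ⟨H, -, ν, -, rfl⟩
    exact wDist_nonneg _ _ _ _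

lemma card_edges_le_mFam {𝔥 : Set (RGraph r)} {G : RGraph r} (hG : G ∈ 𝔥) :
    #G.edges ≤ mFam 𝔥 G.n := by
  refine le_csSup ⟨#(powersetCard r (range G.n)), ?_⟩ ⟨G, hG, rfl, rfl⟩
  rintro _ ⟨F, -, hF, rfl⟩
  refine card_le_card fun e he => mem_powersetCard.2 ⟨fun v hv => ?_, F.uniform e he⟩
  exact mem_range.2 (hF ▸ F.valid e he v hv)

lemma exists_card_fiber_ge {h n : ℕ} (hh : 0 < h) (m : ℕ → ℕ)
    (hm : ∑ i ∈ range h, m i ≤ n) :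
    ∃ φ : ℕ → ℕ, (∀ v, φ v < h) ∧ ∀ i < h, m i ≤ #((range n).filter (φ · = i)) := by
  let e := @finSigmaFinEquiv h fun i => m i
  have hN : ∑ i : Fin h, m i ≤ n := by rwa [Fin.sum_univ_eq_sum_range]
  let φ : ℕ → ℕ := fun v => if hv : v < ∑ i : Fin h, m i then (e.symm ⟨v, hv⟩).1 else 0
  refine ⟨φ, fun v => ?_, fun i hi => ?_⟩
  · simp only [φ]
    split_ifs <;> simp [hh]
  · calc m i = #(univ : Finset (Fin (m i))) := (card_fin _).symm
      _ ≤ _ := card_le_card_of_injOn (fun j => (e ⟨⟨i, hi⟩, j⟩ : ℕ)) (fun j _ => ?_) ?_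
    · have hlt := (e ⟨⟨i, hi⟩, j⟩).2
      simp only [coe_filter, mem_range, Set.mem_ofPred_eq, φ, dif_pos hlt, Fin.eta,
        Equiv.symm_apply_apply]
      exact ⟨hlt.trans_le hN, trivial⟩
    · intro j _ j' _ hjj'
      simpa using e.injective (Fin.ext hjj')

open scoped Classical in
lemma prod_card_fiber_le_card_transversals (φ : ℕ → ℕ) (s E : Finset ℕ) :
    ∏ i ∈ E, #(s.filter (φ · = i)) ≤
      #(s.powerset.filter fun e : Finset ℕ => Set.InjOn φ e ∧ e.image φ = E) := by
  rw [← card_pi]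
  let Φ : (∀ i ∈ E, ℕ) → Finset ℕ := fun g => E.attach.image fun i => g i.1 i.2
  have hg {g} (hg : g ∈ E.pi fun i => s.filter (φ · = i)) (i : ℕ) (hi : i ∈ E) :
      g i hi ∈ s ∧ φ (g i hi) = i :=
    mem_filter.1 (mem_pi.1 hg i hi)
  have hφΦ {g} (hg' : g ∈ E.pi fun i => s.filter (φ · = i)) : (Φ g).image φ = E := by
    ext i
    simp only [Φ, image_image, mem_image, mem_attach, true_and, Function.comp_apply,
      (hg hg' _ _).2, Subtype.exists, exists_prop, exists_eq_right]
  refine card_le_card_of_injOn Φ (fun g hg' => ?_) (fun g hg' g' hg'' hgg' => ?_)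
  · simp only [coe_filter, mem_powerset, Set.mem_ofPred_eq]
    refine ⟨fun v hv => ?_, fun v hv v' hv' hvv' => ?_, hφΦ hg'⟩
    · obtain ⟨i, -, rfl⟩ := mem_image.1 hv
      exact (hg hg' _ _).1
    · obtain ⟨i, -, rfl⟩ := mem_image.1 hv
      obtain ⟨i', -, rfl⟩ := mem_image.1 hv'
      rw [(hg hg' _ _).2, (hg hg' _ _).2] at hvv'
      obtain ⟨i, hi⟩ := i
      obtain rfl : i = i'.1 := hvv'
      rfl
  · funext i hi
    have : g i hi ∈ Φ g' := hgg' ▸ mem_image.2 ⟨⟨i, hi⟩, mem_attach _ _, rfl⟩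
    obtain ⟨⟨i', hi'⟩, -, hii'⟩ := mem_image.1 this
    have : i' = i := by rw [← (hg hg'' i' hi').2, hii', (hg hg' i hi).2]
    subst this
    exact hii'.symm

lemma RGraph.sum_prod_card_fiber_le_card_pullback (H : RGraph r) (n : ℕ) (φ : ℕ → ℕ) :
    ∑ E ∈ H.edges, ∏ i ∈ E, #((range n).filter (φ · = i)) ≤ #(H.pullback n φ).edges := by
  rw [card_eq_sum_card_fiberwise fun e he => (RGraph.mem_pullback_edges.1 he).2.2]
  refine sum_le_sum fun E hE => (prod_card_fiber_le_card_transversals φ _ E).trans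
    (card_le_card fun e he => ?_)
  simp only [mem_filter, mem_powerset] at he ⊢
  obtain ⟨hsub, hinj, rfl⟩ := he
  exact ⟨RGraph.mem_pullback_edges.2 ⟨fun v hv => mem_range.1 (hsub hv), hinj, hE⟩, rfl⟩

lemma mul_prod_le_mul_prod_add {ι : Type*} [DecidableEq ι] (s : Finset ι) {a b : ι → ℝ} {c : ℝ}
    (hb : ∀ i ∈ s, 0 ≤ b i) (hba : ∀ i ∈ s, b i ≤ a i) (hac : ∀ i ∈ s, a i ≤ c)
    (hab : ∀ i ∈ s, a i ≤ b i + 1) :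
    c * ∏ i ∈ s, a i ≤ c * ∏ i ∈ s, b i + #s * c ^ #s := by
  induction s using Finset.induction_on with
  | empty => simp
  | insert x s hx ih =>
    simp only [forall_mem_insert] at hb hba hac hab
    have ih := ih hb.2 hba.2 hac.2 hab.2
    have hc : 0 ≤ c := hb.1.trans (hba.1.trans hac.1)
    have hB : 0 ≤ ∏ i ∈ s, b i := prod_nonneg hb.2
    have hBc : ∏ i ∈ s, b i ≤ c ^ #s :=
      (prod_le_prod hb.2 fun i hi => (hba.2 i hi).trans (hac.2 i hi)).trans_eq (prod_const c)
    have hkc : 0 ≤ (#s : ℝ) * c ^ #s := by positivity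
    rw [prod_insert hx, prod_insert hx, card_insert_of_notMem hx, Nat.cast_succ, pow_succ]
    calc c * (a x * ∏ i ∈ s, a i) = a x * (c * ∏ i ∈ s, a i) := by ring
      _ ≤ a x * (c * ∏ i ∈ s, b i) + c * (#s * c ^ #s) := by
        nlinarith [mul_le_mul_of_nonneg_left ih (hb.1.trans hba.1),
          mul_le_mul_of_nonneg_right hac.1 hkc]
      _ ≤ (b x + 1) * (c * ∏ i ∈ s, b i) + c * (#s * c ^ #s) := by
        gcongr
        exact hab.1
      _ ≤ c * (b x * ∏ i ∈ s, b i) + (#s + 1) * (c ^ #s * c) := by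
        nlinarith [mul_le_mul_of_nonneg_left hBc hc]

lemma IsWeight.le_one {F : RGraph r} {μ : ℕ → ℝ} (hμ : IsWeight F μ) {i : ℕ} (hi : i < F.n) :
    μ i ≤ 1 :=
  hμ.2.2 ▸ single_le_sum (fun j _ => hμ.1 j) (mem_range.2 hi)

lemma lamW_mul_pow_le_mFam {𝔥 : Set (RGraph r)} (hc : Clonable 𝔥) {H : RGraph r} (hH : H ∈ 𝔥)
    {μ : ℕ → ℝ} (hμ : IsWeight H μ) (n : ℕ) :
    n * (lamW H μ * n ^ r) ≤ n * mFam 𝔥 n + #H.edges * r * n ^ r := by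
  let m : ℕ → ℕ := fun i => ⌊μ i * n⌋₊
  have hm_le (i : ℕ) : (m i : ℝ) ≤ μ i * n := Nat.floor_le (mul_nonneg (hμ.1 i) n.cast_nonneg)
  have hsum : ∑ i ∈ range H.n, m i ≤ n := by
    have : (∑ i ∈ range H.n, m i : ℝ) ≤ n := calc
      _ ≤ ∑ i ∈ range H.n, μ i * n := sum_le_sum fun i _ => hm_le i
      _ = n := by rw [← sum_mul, hμ.2.2, one_mul]
    exact_mod_cast this
  obtain ⟨φ, hφ, hfib⟩ := exists_card_fiber_ge hμ.one_le_n m hsum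
  have hedge (E : Finset ℕ) (hE : E ∈ H.edges) :
      n * ((∏ i ∈ E, μ i) * n ^ r) ≤
        n * ∏ i ∈ E, (#((range n).filter (φ · = i)) : ℝ) + r * n ^ r := by
    have hval (i : ℕ) (hi : i ∈ E) : i < H.n := H.valid E hE i hi
    rw [← H.uniform E hE, prod_mul_pow_card]
    calc (n : ℝ) * ∏ i ∈ E, μ i * n ≤ n * ∏ i ∈ E, (m i : ℝ) + #E * n ^ #E :=
          mul_prod_le_mul_prod_add E (fun i _ => (m i).cast_nonneg) (fun i _ => hm_le i)
            (fun i hi => by nlinarith [hμ.le_one (hval i hi)])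
            (fun i _ => (Nat.lt_floor_add_one _).le)
      _ ≤ n * ∏ i ∈ E, (#((range n).filter (φ · = i)) : ℝ) + #E * n ^ #E := by
          gcongr with i hi
          exact_mod_cast hfib i (hval i hi)
  have hpull : ∑ E ∈ H.edges, ∏ i ∈ E, (#((range n).filter (φ · = i)) : ℝ) ≤ mFam 𝔥 n := by
    have : _ ≤ mFam 𝔥 n := (H.sum_prod_card_fiber_le_card_pullback n φ).trans
      (card_edges_le_mFam (hc.pullback_mem hH fun v _ => hφ v))
    exact_mod_cast this
  calc (n : ℝ) * (lamW H μ * n ^ r) = ∑ E ∈ H.edges, n * ((∏ i ∈ E, μ i) * n ^ r) := by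
        rw [lamW, sum_mul, mul_sum]
    _ ≤ ∑ E ∈ H.edges, (n * ∏ i ∈ E, (#((range n).filter (φ · = i)) : ℝ) + r * n ^ r) :=
        sum_le_sum hedge
    _ ≤ n * mFam 𝔥 n + #H.edges * r * n ^ r := by
        rw [sum_add_distrib, ← mul_sum, sum_const, nsmul_eq_mul, mul_assoc]
        gcongr

lemma eventually_lamFam_sub_mul_pow_le_mFam {𝔥 : Set (RGraph r)} (hc : Clonable 𝔥) {γ : ℝ}
    (hγ : 0 < γ) : ∀ᶠ n : ℕ in atTop, (lamFam 𝔥 - γ) * n ^ r ≤ mFam 𝔥 n := by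
  rcases Set.eq_empty_or_nonempty {x | ∃ H ∈ 𝔥, ∃ μ, IsWeight H μ ∧ x = lamW H μ} with h | h
  · rw [lamFam, h, Real.sSup_empty, zero_sub]
    exact Eventually.of_forall fun n => by
      nlinarith [(mFam 𝔥 n).cast_nonneg (α := ℝ), pow_nonneg (n.cast_nonneg (α := ℝ)) r]
  obtain ⟨_, ⟨H, hH, μ, hμ, rfl⟩, hμγ⟩ :=
    exists_lt_of_lt_csSup h (show lamFam 𝔥 - γ / 2 < lamFam 𝔥 by linarith)
  filter_upwards [eventually_ge_atTop ⌈2 * #H.edges * r / γ⌉₊, eventually_gt_atTop 0]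
    with n hn hn₀
  have hn₀ : (0 : ℝ) < n := Nat.cast_pos.2 hn₀
  have hedges : (#H.edges * r : ℝ) ≤ γ / 2 * n := by
    have := (Nat.ceil_le.1 hn)
    rw [div_le_iff₀ hγ] at this
    linarith
  refine le_of_mul_le_mul_left ?_ hn₀
  have hpow : (0 : ℝ) ≤ n ^ r := by positivity
  nlinarith [lamW_mul_pow_le_mFam hc hH hμ n, mul_le_mul_of_nonneg_right hedges hpow,
    mul_le_mul_of_nonneg_left hμγ.le (mul_nonneg hn₀.le hpow)]

lemma exists_le_of_sum_mul_le {ι : Type*} {s : Finset ι} {P f : ι → ℝ} {B : ℝ}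
    (hP : ∀ i ∈ s, 0 ≤ P i) (hP₁ : ∑ i ∈ s, P i = 1) (h : ∑ i ∈ s, P i * f i ≤ B) :
    ∃ i ∈ s, f i ≤ B := by
  by_contra! hlt
  obtain ⟨i, hi, hPi⟩ := exists_lt_of_sum_lt (s := s) (f := fun _ => 0) (g := P) (by simp [hP₁])
  have : ∑ i ∈ s, P i * B < ∑ i ∈ s, P i * f i :=
    sum_lt_sum (fun j hj => mul_le_mul_of_nonneg_left (hlt j hj).le (hP j hj))
      ⟨i, hi, mul_lt_mul_of_pos_left (hlt i hi) hPi⟩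
  rw [← sum_mul, hP₁, one_mul] at this
  linarith

lemma sum_filter_subset_singleton_le_prod {A B : Finset ℕ} (hBA : B ⊆ A) {a : ℕ → ℝ}
    (ha : ∀ v ∈ A, 0 ≤ a v) (hA : ∑ v ∈ A, a v = 1) :
    ∑ v ∈ A with B ⊆ {v}, a v ≤ ∏ v ∈ B, a v := by
  rcases B.eq_empty_or_nonempty with rfl | hB
  · simp [hA]
  simp_rw [hB.subset_singleton_iff, sum_filter]
  by_cases h : ∃ b, B = {b}
  · obtain ⟨b, rfl⟩ := h
    simp_rw [singleton_inj, sum_ite_eq, if_pos (hBA (mem_singleton_self b)), prod_singleton,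
      le_refl]
  · simp only [not_exists] at h
    simp_rw [if_neg (h _), sum_const_zero]
    exact prod_nonneg fun v hv => ha v (hBA hv)

lemma sum_piFinset_ite_subset_image_le_prod {n : ℕ} {s S : Finset ℕ} (hS : S ⊆ s) {φ : ℕ → ℕ}
    (hφ : ∀ v ∈ s, φ v < n) {a : ℕ → ℝ} (ha : ∀ v, 0 ≤ a v)
    (hfib : ∀ i < n, ∑ v ∈ s with φ v = i, a v = 1) :
    ∑ σ ∈ Fintype.piFinset fun i : Fin n => s.filter (φ · = i),
      (if S ⊆ univ.image σ then ∏ i, a (σ i) else 0) ≤ ∏ v ∈ S, a v := by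
  have hind : ∀ σ ∈ Fintype.piFinset fun i : Fin n => s.filter (φ · = i),
      (if S ⊆ univ.image σ then ∏ i, a (σ i) else 0) ≤
        ∏ i : Fin n, if S.filter (φ · = i) ⊆ {σ i} then a (σ i) else 0 := by
    intro σ hσ
    split_ifs with hSσ
    · refine (Finset.prod_congr rfl fun i _ => (if_pos fun v hv => ?_).symm).le
      obtain ⟨hvS, hvi⟩ := mem_filter.1 hv
      obtain ⟨j, -, rfl⟩ := mem_image.1 (hSσ hvS)
      rw [(mem_filter.1 (Fintype.mem_piFinset.1 hσ j)).2, Fin.val_inj] at hvi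
      rw [hvi, mem_singleton]
    · exact prod_nonneg fun i _ => by split_ifs <;> simp [ha]
  calc _ ≤ ∑ σ ∈ Fintype.piFinset fun i : Fin n => s.filter (φ · = i),
        ∏ i : Fin n, if S.filter (φ · = i) ⊆ {σ i} then a (σ i) else 0 := sum_le_sum hind
    _ = ∏ i : Fin n, ∑ v ∈ s with φ v = i, if S.filter (φ · = i) ⊆ {v} then a v else 0 :=
        by rw [Finset.prod_univ_sum]
    _ = ∏ i ∈ range n, ∑ v ∈ s with φ v = i, if S.filter (φ · = i) ⊆ {v} then a v else 0 :=
        Fin.prod_univ_eq_prod_range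
          (fun i => ∑ v ∈ s with φ v = i, if S.filter (φ · = i) ⊆ {v} then a v else 0) n
    _ ≤ ∏ i ∈ range n, ∏ v ∈ S with φ v = i, a v := by
        refine prod_le_prod (fun i _ => sum_nonneg fun v _ => by split_ifs <;> simp [ha])
          fun i hi => ?_
        rw [← sum_filter]
        exact sum_filter_subset_singleton_le_prod (filter_subset_filter _ hS) (fun v _ => ha v)
          (hfib i (mem_range.1 hi))
    _ = ∏ v ∈ S, a v := prod_fiberwise_of_maps_to (fun v hv => mem_range.2 (hφ v (hS hv))) a

lemma card_filter_image_mem_le {n k : ℕ} {Δ : Finset (Finset ℕ)} {t φ : ℕ → ℕ}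
    (ht : ∀ i < n, φ (t i) = i) :
    #((powersetCard k (range n)).filter (·.image t ∈ Δ)) ≤ #(Δ.filter (· ⊆ (range n).image t)) := by
  have hleft (e : Finset ℕ) (he : e ⊆ range n) : (e.image t).image φ = e := by
    rw [image_image]
    conv_rhs => rw [← image_id (s := e)]
    exact image_congr fun v hv => ht v (mem_range.1 (he hv))
  refine card_le_card_of_injOn (·.image t) (fun e he => ?_) (fun e he e' he' h => ?_)
  · simp only [coe_filter, mem_powersetCard, Set.mem_ofPred_eq] at he ⊢
    exact ⟨he.2, image_subset_image he.1.1⟩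
  · simp only [coe_filter, mem_powersetCard, Set.mem_ofPred_eq] at he he'
    rw [← hleft e he.1.1, ← hleft e' he'.1.1]
    exact congrArg (image φ) h

lemma exists_section_card_filter_image_mem_le {n N k : ℕ} {φ : ℕ → ℕ} (hφ : ∀ v < N, φ v < n)
    {w : ℕ → ℝ} (hw : ∀ v, 0 ≤ w v)
    (hfib : ∀ i < n, ∑ v ∈ (range N).filter (φ · = i), w v = (n : ℝ)⁻¹)
    {Δ : Finset (Finset ℕ)} (hΔ : ∀ S ∈ Δ, S ⊆ range N ∧ S.card = k) :
    ∃ t : ℕ → ℕ, (∀ i < n, t i < N ∧ φ (t i) = i) ∧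
      (#((powersetCard k (range n)).filter (·.image t ∈ Δ)) : ℝ) ≤
        n ^ k * ∑ S ∈ Δ, ∏ v ∈ S, w v := by
  -- `σ ∈ T` picks a vertex in every fibre of `φ`, with probability `P σ`
  let T := Fintype.piFinset fun i : Fin n => (range N).filter (φ · = i)
  let P : (Fin n → ℕ) → ℝ := fun σ => ∏ i, n * w (σ i)
  let ext : (Fin n → ℕ) → ℕ → ℕ := fun σ i => if h : i < n then σ ⟨i, h⟩ else 0
  have hext {σ} (hσ : σ ∈ T) (i : ℕ) (hi : i < n) : ext σ i < N ∧ φ (ext σ i) = i := by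
    simpa [ext, hi] using Fintype.mem_piFinset.1 hσ ⟨i, hi⟩
  have himage (σ : Fin n → ℕ) : (range n).image (ext σ) = univ.image σ := by
    ext v
    simp only [mem_image, mem_range, mem_univ, true_and, ext]
    exact ⟨fun ⟨i, hi, h⟩ => ⟨⟨i, hi⟩, by rwa [dif_pos hi] at h⟩,
      fun ⟨i, h⟩ => ⟨i, i.2, by rwa [dif_pos i.2]⟩⟩
  have hnw (i : ℕ) (hi : i < n) : ∑ v ∈ (range N).filter (φ · = i), n * w v = 1 := by
    rw [← mul_sum, hfib i hi, mul_inv_cancel₀ (Nat.cast_ne_zero.2 (by omega))]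
  have hP₁ : ∑ σ ∈ T, P σ = 1 := by
    rw [← Finset.prod_univ_sum (fun i : Fin n => (range N).filter (φ · = i))
      fun _ v => (n : ℝ) * w v]
    exact prod_eq_one fun i _ => hnw i i.2
  have hexp : ∑ σ ∈ T, P σ * #((powersetCard k (range n)).filter (·.image (ext σ) ∈ Δ)) ≤
      n ^ k * ∑ S ∈ Δ, ∏ v ∈ S, w v := calc
    _ ≤ ∑ σ ∈ T, P σ * #(Δ.filter (· ⊆ univ.image σ)) := by
        refine sum_le_sum fun σ hσ => mul_le_mul_of_nonneg_left ?_
          (prod_nonneg fun i _ => by have := hw (σ i); positivity)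
        rw [← himage]
        exact_mod_cast card_filter_image_mem_le fun i hi => (hext hσ i hi).2
    _ = ∑ S ∈ Δ, ∑ σ ∈ T, if S ⊆ univ.image σ then P σ else 0 := by
        rw [sum_comm]
        refine sum_congr rfl fun σ _ => ?_
        rw [card_filter, Nat.cast_sum, mul_sum]
        exact sum_congr rfl fun S _ => by split_ifs <;> simp
    _ ≤ ∑ S ∈ Δ, ∏ v ∈ S, n * w v := sum_le_sum fun S hS =>
        sum_piFinset_ite_subset_image_le_prod (hΔ S hS).1 (fun v hv => hφ v (mem_range.1 hv))
          (fun v => by have := hw v; positivity) hnw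
    _ = n ^ k * ∑ S ∈ Δ, ∏ v ∈ S, w v := by
        rw [mul_sum]
        exact sum_congr rfl fun S hS => by rw [prod_mul_distrib, prod_const, (hΔ S hS).2]
  obtain ⟨σ, hσ, hle⟩ := exists_le_of_sum_mul_le
    (fun σ _ => prod_nonneg fun i _ => by have := hw (σ i); positivity) hP₁ hexp
  exact ⟨ext σ, hext hσ, hle⟩

lemma distFam_nonneg (𝔥 : Set (RGraph r)) (F : RGraph r) : 0 ≤ distFam 𝔥 F :=
  Real.sInf_nonneg <| by
    rintro _ ⟨_, -, -, rfl⟩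
    positivity

lemma distFam_le_card_symmDiff {𝔥 : Set (RGraph r)} {F H : RGraph r} (hH : H ∈ 𝔥)
    (hn : H.n = F.n) : distFam 𝔥 F ≤ #(symmDiff F.edges H.edges) :=
  csInf_le ⟨0, by rintro _ ⟨_, -, -, rfl⟩; positivity⟩ ⟨H, hH, hn, rfl⟩

lemma distFam_le_mul_dPrime {𝔥 : Set (RGraph r)} (hc : Clonable 𝔥) {F H G₁ G₂ : RGraph r}
    (hH : H ∈ 𝔥) {ν w : ℕ → ℝ} (hn : G₁.n = G₂.n) (hB₁ : WIsBlowup F (uniformW F) G₁ w)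
    (hB₂ : WIsBlowup H ν G₂ w) :
    distFam 𝔥 F ≤ F.n ^ r * dPrime G₁.edges G₂.edges w := by
  obtain ⟨hw, φ₁, hφ₁, hfib₁⟩ := hB₁
  obtain ⟨-, φ₂, hφ₂, -⟩ := hB₂
  have hfib : ∀ i < F.n, ∑ v ∈ (range G₁.n).filter (φ₁ · = i), w v = (F.n : ℝ)⁻¹ :=
    fun i hi => by rw [← hfib₁ i hi, uniformW, if_pos hi]
  obtain ⟨t, ht, hcard⟩ := exists_section_card_filter_image_mem_le hφ₁.1 hw.1 hfib
    fun S hS => RGraph.subset_range_and_card_of_mem_symmDiff hn hS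
  set H' := H.pullback F.n (φ₂ ∘ t)
  have hH' : H' ∈ 𝔥 := hc.pullback_mem hH fun i hi => hφ₂.1 _ (hn ▸ (ht i hi).1)
  have hsub : symmDiff F.edges H'.edges ⊆
      (powersetCard r (range F.n)).filter (·.image t ∈ symmDiff G₁.edges G₂.edges) := by
    intro e he
    obtain ⟨he_sub, he_card⟩ :=
      RGraph.subset_range_and_card_of_mem_symmDiff (show F.n = H'.n from rfl) he
    have hte (v : ℕ) (hv : v ∈ e) := ht v (mem_range.1 (he_sub hv))
    have hφ₁t : Set.EqOn (φ₁ ∘ t) id e := fun v hv => (hte v hv).2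
    have htinj : Set.InjOn t e := fun v hv v' hv' h => by
      rw [← (hte v hv).2, ← (hte v' hv').2, h]
    have hF : e ∈ F.edges ↔ e.image t ∈ G₁.edges := by
      rw [hφ₁.image_mem_edges_iff (fun v hv => (hte v hv).1) htinj, image_congr hφ₁t,
        image_id, hφ₁t.injOn_iff, and_iff_right (Set.injOn_id _)]
    have hH : e ∈ H'.edges ↔ e.image t ∈ G₂.edges := by
      rw [hφ₂.image_mem_edges_iff (fun v hv => hn ▸ (hte v hv).1) htinj,
        RGraph.mem_pullback_edges]
      exact and_iff_right fun v hv => mem_range.1 (he_sub hv)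
    rw [mem_filter, mem_powersetCard, mem_symmDiff, ← hF, ← hH, ← mem_symmDiff]
    exact ⟨⟨he_sub, he_card⟩, he⟩
  calc distFam 𝔥 F ≤ #(symmDiff F.edges H'.edges) :=
        distFam_le_card_symmDiff hH' rfl
    _ ≤ #((powersetCard r (range F.n)).filter (·.image t ∈ symmDiff G₁.edges G₂.edges)) := by
        exact_mod_cast card_le_card hsub
    _ ≤ F.n ^ r * dPrime G₁.edges G₂.edges w := hcard

lemma distFam_le_mul_wDistFam {𝔥 : Set (RGraph r)} (hc : Clonable 𝔥) {F : RGraph r}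
    (hF : 1 ≤ F.n) : distFam 𝔥 F ≤ F.n ^ r * wDistFam 𝔥 F (uniformW F) := by
  have hpow : (0 : ℝ) < F.n ^ r := by positivity
  rcases Set.eq_empty_or_nonempty
    {x : ℝ | ∃ H ∈ 𝔥, ∃ ν, IsWeight H ν ∧ x = wDist F (uniformW F) H ν} with h | h
  · have hF_empty :
        {x : ℝ | ∃ H ∈ 𝔥, H.n = F.n ∧ x = #(symmDiff F.edges H.edges)} = ∅ := by
      refine Set.eq_empty_of_forall_notMem ?_
      rintro _ ⟨H, hH, hHn, -⟩
      exact h.subset ⟨H, hH, uniformW H, isWeight_uniformW (hHn ▸ hF), rfl⟩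
    rw [distFam, hF_empty, wDistFam, h, Real.sInf_empty, mul_zero]
  rw [← div_le_iff₀' hpow]
  refine le_csInf h ?_
  rintro _ ⟨H, hH, ν, hν, rfl⟩
  obtain ⟨G₁, G₂, w, hn, hB₁, hB₂⟩ := exists_common_blowup (isWeight_uniformW hF) hν
  refine le_csInf ⟨_, G₁, G₂, w, hn, hB₁, hB₂, rfl⟩ ?_
  rintro _ ⟨G₁, G₂, w, hn, hB₁, hB₂, rfl⟩
  rw [div_le_iff₀' hpow]
  exact distFam_le_mul_dPrime hc hH hn hB₁ hB₂

/-- If `𝔥` is clonable and `𝔉` is `𝔥`-locally stable and `𝔥`-weight stable,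
then `𝔉` is `𝔥`-stable. -/
theorem stable_of_locallyStable_of_weightStable {r : ℕ} (𝔉 𝔥 : Set (RGraph r))
    (hc : Clonable 𝔥) (h1 : HLocallyStable 𝔉 𝔥) (h2 : HWeightStable 𝔉 𝔥) :
    HStable 𝔉 𝔥 := by
  obtain ⟨ε, hε, α₁, hα₁, n₁, hloc⟩ := h1
  obtain ⟨α₂, hα₂, hweight⟩ := h2
  have hγ : 0 < α₂ * ε / 2 := by positivity
  obtain ⟨n₂, hm⟩ := eventually_atTop.1 (eventually_lamFam_sub_mul_pow_le_mFam hc hγ)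
  refine ⟨min α₁ (α₂ * ε / 2), lt_min hα₁ hγ, max n₁ (max n₂ 1), fun F hF hn hd => ?_⟩
  simp only [max_le_iff] at hn
  have hd₀ := distFam_nonneg 𝔥 F
  by_cases hclose : distFam 𝔥 F ≤ ε * F.n ^ r
  · nlinarith [hloc F hF hn.1 hclose, min_le_left α₁ (α₂ * ε / 2)]
  have hpow : (0 : ℝ) < F.n ^ r := by have := hn.2.2; positivity
  have hξ := isWeight_uniformW hn.2.2
  have hfar : ε ≤ wDistFam 𝔥 F (uniformW F) := by
    by_contra! h
    nlinarith [distFam_le_mul_wDistFam hc hn.2.2]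
  have hF_le := hweight F hF _ hξ (wDistFam_le_one 𝔥 hξ)
  rw [lamW_uniformW, div_le_iff₀ hpow] at hF_le
  calc (#F.edges : ℝ) ≤ (lamFam 𝔥 - α₂ * wDistFam 𝔥 F (uniformW F)) * F.n ^ r := hF_le
    _ ≤ (lamFam 𝔥 - α₂ * ε / 2) * F.n ^ r - α₂ * ε / 2 * F.n ^ r := by
        nlinarith [mul_le_mul_of_nonneg_right (mul_le_mul_of_nonneg_left hfar hα₂.le) hpow.le]
    _ ≤ mFam 𝔥 F.n - min α₁ (α₂ * ε / 2) * distFam 𝔥 F := by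
        nlinarith [hm F.n hn.2.1, min_le_right α₁ (α₂ * ε / 2)]

end TuranGT
end

section
/- Let 𝔉 be a clonable family of r-graphs. For every ε>0 there exist δ>0 and n0 such that the following holds: for every F ∈ 𝔉 with v(F)=n ≥ n0 and |F| ≥ (m(𝔉) − δ)·n^r, there exists X ⊆ V(F) with |X| ≥ (1−ε)n such that | |L_F(v)| − r·m(𝔉)·n^{r-1} | ≤ ε·n^{r-1} for every v ∈ X. -/
open Filter

namespace TuranGT

variable {r : ℕ}

/-!
Cloning a vertex `v` of `F ∈ 𝔉` exactly `s` times gives a member of `𝔉` on `n + s` vertices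
with at least `|F| + s |L(v)|` edges. Cloning every vertex once and averaging shows that
`m(𝔉, n) / (n (n + 1) ⋯ (n + r - 1))` is non-decreasing, so `𝔉` is smooth. If
`|F| ≥ (m(𝔉) - δ) n ^ r`, cloning any `v` about `θ n` times and comparing with
`m(𝔉, (1 + θ) n) ≈ m(𝔉) (1 + θ) ^ r n ^ r` bounds `|L(v)|` above by `(r m(𝔉) + η) n ^ (r - 1)`:
the factor `r` is the slope of `x ↦ x ^ r` at `1`. As the degrees sum to `r |F|`, this upper
bound leaves room for only few vertices of degree below `(r m(𝔉) - ε) n ^ (r - 1)`.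
-/

open Finset Topology

theorem mem_link {F : RGraph r} {v : ℕ} {I : Finset ℕ} :
    I ∈ link F v ↔ ∃ e ∈ F.edges, v ∈ e ∧ e.erase v = I := by
  simp [link, and_assoc]

theorem card_link (F : RGraph r) (v : ℕ) : #(link F v) = #{e ∈ F.edges | v ∈ e} := by
  refine card_image_of_injOn fun e he e' he' h => ?_
  simp only [coe_filter, Set.mem_ofPred_eq] at he he'
  rw [← insert_erase he.2, ← insert_erase he'.2]
  exact congrArg (insert v) h

theorem sum_card_link (F : RGraph r) : ∑ v ∈ range F.n, #(link F v) = r * #F.edges := by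
  have hinter : ∀ e ∈ F.edges, range F.n ∩ e = e := fun e he =>
    inter_eq_right.2 fun v hv => mem_range.2 (F.valid e he v hv)
  simp_rw [card_link, card_filter]
  rw [sum_comm, mul_comm, ← smul_eq_mul, ← sum_const]
  refine sum_congr rfl fun e he => ?_
  rw [← card_filter, filter_mem_eq_inter, hinter e he, F.uniform e he]

theorem card_edges_le_choose (F : RGraph r) : #F.edges ≤ F.n.choose r := by
  rw [← card_range F.n, ← card_powersetCard]
  exact card_le_card fun e he =>
    mem_powersetCard.2 ⟨fun v hv => mem_range.2 (F.valid e he v hv), F.uniform e he⟩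

theorem bddAbove_card_edges (𝔉 : Set (RGraph r)) (n : ℕ) :
    BddAbove {k | ∃ F ∈ 𝔉, F.n = n ∧ #F.edges = k} :=
  ⟨n.choose r, by rintro k ⟨F, -, rfl, rfl⟩; exact card_edges_le_choose F⟩

theorem mFam_le_choose (𝔉 : Set (RGraph r)) (n : ℕ) : mFam 𝔉 n ≤ n.choose r :=
  csSup_le' (by rintro k ⟨F, -, rfl, rfl⟩; exact card_edges_le_choose F)

theorem card_edges_le_mFam_s8 {𝔉 : Set (RGraph r)} {F : RGraph r} (hF : F ∈ 𝔉) :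
    #F.edges ≤ mFam 𝔉 F.n :=
  le_csSup (bddAbove_card_edges 𝔉 F.n) ⟨F, hF, rfl, rfl⟩

theorem exists_card_edges_eq_mFam {𝔉 : Set (RGraph r)} {n : ℕ} (h : mFam 𝔉 n ≠ 0) :
    ∃ F ∈ 𝔉, F.n = n ∧ #F.edges = mFam 𝔉 n := by
  refine Nat.sSup_mem ?_ (bddAbove_card_edges 𝔉 n)
  by_contra hne
  exact h (by simp [mFam, Set.not_nonempty_iff_eq_empty.1 hne])

namespace RGraph

open Classical in
noncomputable def blowup (F : RGraph r) (N : ℕ) (φ : ℕ → ℕ) : RGraph r where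
  n := N
  edges := (range N).powerset.filter fun e => Set.InjOn φ e ∧ e.image φ ∈ F.edges
  uniform e he := by
    rw [mem_filter] at he
    rw [← card_image_of_injOn he.2.1, F.uniform _ he.2.2]
  valid e he v hv := mem_range.1 (mem_powerset.1 (mem_filter.1 he).1 hv)

theorem mem_blowup_edges {F : RGraph r} {N : ℕ} {φ : ℕ → ℕ} {e : Finset ℕ} :
    e ∈ (F.blowup N φ).edges ↔
      (∀ v ∈ e, v < N) ∧ Set.InjOn φ e ∧ e.image φ ∈ F.edges := by
  simp [blowup, subset_iff]

theorem isBlowup_blowup (F : RGraph r) {N : ℕ} {φ : ℕ → ℕ} (hφ : ∀ v < N, φ v < F.n) :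
    IsBlowup F (F.blowup N φ) :=
  ⟨φ, hφ, fun _ => mem_blowup_edges⟩

def cloneMap (n v w : ℕ) : ℕ := if w < n then w else v

theorem cloneMap_of_lt {n v w : ℕ} (h : w < n) : cloneMap n v w = w := if_pos h

theorem cloneMap_add (n v i : ℕ) : cloneMap n v (n + i) = v := if_neg (by omega)

theorem cloneMap_lt {n v : ℕ} (hv : v < n) (w : ℕ) : cloneMap n v w < n := by
  unfold cloneMap
  split_ifs with h
  exacts [h, hv]

noncomputable def cloneVertex (F : RGraph r) (v s : ℕ) : RGraph r :=
  F.blowup (F.n + s) (cloneMap F.n v)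

theorem edges_subset_cloneVertex (F : RGraph r) (v s : ℕ) :
    F.edges ⊆ (F.cloneVertex v s).edges := by
  intro e he
  have hid : ∀ w ∈ e, cloneMap F.n v w = w := fun w hw => cloneMap_of_lt (F.valid e he w hw)
  refine mem_blowup_edges.2 ⟨fun w hw => by have := F.valid e he w hw; omega, ?_, ?_⟩
  · exact Set.injOn_id _ |>.congr fun w hw => (hid w hw).symm
  · rwa [image_congr hid, image_id']

theorem insert_mem_cloneVertex {F : RGraph r} {v s i : ℕ} (hi : i < s) {I : Finset ℕ}
    (hI : I ∈ link F v) : insert (F.n + i) I ∈ (F.cloneVertex v s).edges := by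
  obtain ⟨e, he, hve, rfl⟩ := mem_link.1 hI
  have hlt : ∀ w ∈ e.erase v, w < F.n := fun w hw => F.valid e he w (mem_of_mem_erase hw)
  have hid : ∀ w ∈ e.erase v, cloneMap F.n v w = w := fun w hw => cloneMap_of_lt (hlt w hw)
  refine mem_blowup_edges.2 ⟨?_, ?_, ?_⟩
  · intro w hw
    rcases mem_insert.1 hw with rfl | hw
    · omega
    · have := hlt w hw; omega
  · rw [coe_insert, Set.injOn_insert (fun h => by have := hlt _ h; omega)]
    refine ⟨Set.injOn_id _ |>.congr fun w hw => (hid w hw).symm, ?_⟩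
    rintro ⟨w, hw, hwv⟩
    rw [hid w hw, cloneMap_add] at hwv
    exact notMem_erase w e (hwv ▸ hw)
  · rw [image_insert, cloneMap_add, image_congr hid, image_id', insert_erase hve]
    exact he

theorem card_add_mul_card_link_le (F : RGraph r) (v s : ℕ) :
    #F.edges + s * #(link F v) ≤ #(F.cloneVertex v s).edges := by
  have hlink : ∀ I ∈ link F v, ∀ w ∈ I, w < F.n := by
    intro I hI w hw
    obtain ⟨e, he, -, rfl⟩ := mem_link.1 hI
    exact F.valid e he w (mem_of_mem_erase hw)
  set new := (range s ×ˢ link F v).image fun p => insert (F.n + p.1) p.2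
  have hnew : #new = s * #(link F v) := by
    rw [card_image_of_injOn, card_product, card_range]
    rintro ⟨i, I⟩ hp ⟨j, J⟩ hq h
    simp only [coe_product, Set.mem_prod, coe_range, Set.mem_Iio, mem_coe] at hp hq h
    have hI : F.n + i ∉ I := fun h' => by have := hlink I hp.2 _ h'; omega
    have hJ : F.n + j ∉ J := fun h' => by have := hlink J hq.2 _ h'; omega
    have hij : i = j := by
      have := h ▸ mem_insert_self (F.n + i) I
      rcases mem_insert.1 this with h' | h'
      · omega
      · exact absurd (hlink J hq.2 _ h') (by omega)
    subst hij
    rw [← erase_insert hI, ← erase_insert hJ, h]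
  have hdisj : Disjoint F.edges new := by
    refine disjoint_left.2 fun e he hnew => ?_
    obtain ⟨⟨i, I⟩, -, rfl⟩ := mem_image.1 hnew
    have := F.valid _ he _ (mem_insert_self _ _)
    omega
  have hsub : F.edges ∪ new ⊆ (F.cloneVertex v s).edges := by
    refine union_subset (edges_subset_cloneVertex F v s) fun e he => ?_
    obtain ⟨⟨i, I⟩, hp, rfl⟩ := mem_image.1 he
    rw [mem_product, mem_range] at hp
    exact insert_mem_cloneVertex hp.1 hp.2
  rw [← hnew, ← card_union_of_disjoint hdisj]
  exact card_le_card hsub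

end RGraph

theorem Clonable.card_add_mul_card_link_le_mFam {𝔉 : Set (RGraph r)} (hc : Clonable 𝔉)
    {F : RGraph r} (hF : F ∈ 𝔉) {v : ℕ} (hv : v < F.n) (s : ℕ) :
    #F.edges + s * #(link F v) ≤ mFam 𝔉 (F.n + s) := by
  have hG : F.cloneVertex v s ∈ 𝔉 :=
    hc F hF _ (F.isBlowup_blowup fun w _ => RGraph.cloneMap_lt hv w)
  exact (F.card_add_mul_card_link_le v s).trans (card_edges_le_mFam_s8 hG)

theorem Clonable.add_mul_mFam_le {𝔉 : Set (RGraph r)} (hc : Clonable 𝔉) (n : ℕ) :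
    (n + r) * mFam 𝔉 n ≤ n * mFam 𝔉 (n + 1) := by
  rcases eq_or_ne (mFam 𝔉 n) 0 with h0 | h0
  · simp [h0]
  obtain ⟨F, hF, rfl, hcard⟩ := exists_card_edges_eq_mFam h0
  calc (F.n + r) * mFam 𝔉 F.n = ∑ v ∈ range F.n, (#F.edges + 1 * #(link F v)) := by
        simp_rw [one_mul, sum_add_distrib, sum_card_link, sum_const, card_range, ← hcard]
        ring
    _ ≤ ∑ _v ∈ range F.n, mFam 𝔉 (F.n + 1) :=
        sum_le_sum fun v hv => hc.card_add_mul_card_link_le_mFam hF (mem_range.1 hv) 1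
    _ = F.n * mFam 𝔉 (F.n + 1) := by rw [sum_const, card_range, smul_eq_mul]

theorem Clonable.monotone_mFam_div_ascFactorial {𝔉 : Set (RGraph r)} (hc : Clonable 𝔉)
    (hr : 0 < r) : Monotone fun n => (mFam 𝔉 n : ℝ) / n.ascFactorial r := by
  refine monotone_nat_of_le_succ fun n => ?_
  rcases Nat.eq_zero_or_pos n with rfl | hn
  · obtain ⟨k, rfl⟩ := Nat.exists_eq_add_one_of_ne_zero hr.ne'
    rw [Nat.zero_ascFactorial, Nat.cast_zero, div_zero]
    positivity
  have ha : (0 : ℝ) < n.ascFactorial r := by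
    obtain ⟨m, rfl⟩ := Nat.exists_eq_add_one_of_ne_zero hn.ne'
    exact_mod_cast Nat.ascFactorial_pos m r
  rw [div_le_div_iff₀ ha (by exact_mod_cast Nat.ascFactorial_pos n r)]
  have hshift : (n : ℝ) * (n + 1).ascFactorial r = (n + r) * n.ascFactorial r := by
    exact_mod_cast Nat.succ_ascFactorial n r
  have hrec : ((n : ℝ) + r) * mFam 𝔉 n ≤ n * mFam 𝔉 (n + 1) := by
    exact_mod_cast hc.add_mul_mFam_le n
  refine le_of_mul_le_mul_left ?_ (by exact_mod_cast hn : (0 : ℝ) < n)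
  calc (n : ℝ) * (mFam 𝔉 n * (n + 1).ascFactorial r)
      = mFam 𝔉 n * (n * (n + 1).ascFactorial r) := by ring
    _ = ((n + r) * mFam 𝔉 n) * n.ascFactorial r := by rw [hshift]; ring
    _ ≤ (n * mFam 𝔉 (n + 1)) * n.ascFactorial r := by gcongr
    _ = n * (mFam 𝔉 (n + 1) * n.ascFactorial r) := by ring

theorem mFam_div_ascFactorial_le_one (𝔉 : Set (RGraph r)) (n : ℕ) :
    (mFam 𝔉 n : ℝ) / n.ascFactorial r ≤ 1 := by
  refine div_le_one_of_le₀ ?_ (Nat.cast_nonneg _)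
  exact_mod_cast (mFam_le_choose 𝔉 n).trans
    ((Nat.choose_le_pow n r).trans (Nat.pow_succ_le_ascFactorial n r))

theorem tendsto_ascFactorial_div_pow (r : ℕ) :
    Tendsto (fun n : ℕ => (n.ascFactorial r : ℝ) / (n : ℝ) ^ r) atTop (𝓝 1) := by
  have hupper : Tendsto (fun n : ℕ => (1 + (r : ℝ) / n) ^ r) atTop (𝓝 1) := by
    simpa using (((tendsto_const_nhds (x := (r : ℝ))).div_atTop
      tendsto_natCast_atTop_atTop).const_add 1).pow r
  refine tendsto_of_tendsto_of_tendsto_of_le_of_le' tendsto_const_nhds hupper ?_ ?_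
  all_goals filter_upwards [eventually_gt_atTop 0] with n hn
  · rw [le_div_iff₀ (by positivity), one_mul]
    exact_mod_cast Nat.pow_succ_le_ascFactorial n r
  · rw [div_le_iff₀ (by positivity), ← mul_pow, add_mul, one_mul,
      div_mul_cancel₀ _ (by positivity)]
    obtain ⟨m, rfl⟩ := Nat.exists_eq_add_one_of_ne_zero hn.ne'
    exact_mod_cast (Nat.ascFactorial_le_pow_add m r).trans (Nat.pow_le_pow_left (by omega) r)

theorem Clonable.tendsto_mFam_div_pow {𝔉 : Set (RGraph r)} (hc : Clonable 𝔉) (hr : 0 < r) :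
    Tendsto (fun n : ℕ => (mFam 𝔉 n : ℝ) / (n : ℝ) ^ r) atTop (𝓝 (mDen 𝔉)) := by
  set b := fun n : ℕ => (mFam 𝔉 n : ℝ) / n.ascFactorial r
  have hb : Tendsto b atTop (𝓝 (⨆ n, b n)) :=
    tendsto_atTop_ciSup (hc.monotone_mFam_div_ascFactorial hr)
      ⟨1, Set.forall_mem_range.2 (mFam_div_ascFactorial_le_one 𝔉)⟩
  have hlim : Tendsto (fun n : ℕ => (mFam 𝔉 n : ℝ) / (n : ℝ) ^ r) atTop (𝓝 (⨆ n, b n)) := by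
    refine (mul_one (⨆ n, b n) ▸ hb.mul (tendsto_ascFactorial_div_pow r)).congr' ?_
    filter_upwards [eventually_gt_atTop 0] with n hn
    obtain ⟨m, rfl⟩ := Nat.exists_eq_add_one_of_ne_zero hn.ne'
    have : (0 : ℝ) < (m + 1).ascFactorial r := by exact_mod_cast Nat.ascFactorial_pos m r
    simp only [b]
    field_simp
  rwa [mDen, hlim.limUnder_eq]

theorem exists_increment_le_of_tendsto_div_pow {f : ℕ → ℝ} {L : ℝ} {r : ℕ}
    (hf : Tendsto (fun n : ℕ => f n / (n : ℝ) ^ (r + 1)) atTop (𝓝 L)) {η : ℝ} (hη : 0 < η) :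
    ∃ δ > 0, ∀ᶠ n : ℕ in atTop, ∀ E d : ℝ, (L - δ) * (n : ℝ) ^ (r + 1) ≤ E →
      (∀ s : ℕ, E + s * d ≤ f (n + s)) → d ≤ ((r + 1) * L + η) * (n : ℝ) ^ r := by
  -- the slope of `x ↦ x ^ (r + 1)` at `1`
  have hslope : Tendsto (fun θ : ℝ => L * (θ⁻¹ * ((1 + θ) ^ (r + 1) - 1))) (𝓝[>] 0)
      (𝓝 (L * (r + 1))) := by
    have := (hasDerivAt_pow (r + 1) (1 : ℝ)).tendsto_slope_zero_right
    simp only [one_pow, mul_one, smul_eq_mul, Nat.cast_add, Nat.cast_one] at this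
    exact this.const_mul L
  obtain ⟨θ, hθL, hθ⟩ := ((hslope.eventually (gt_mem_nhds (lt_add_of_pos_right _
    (half_pos hη)))).and self_mem_nhdsWithin).exists
  refine ⟨θ * η / 4, by positivity, ?_⟩
  -- with `s n = ⌈θ n⌉` we get `d ≤ a n * n ^ r`, and `a n` tends to a limit below `(r + 1) L + η`
  set s : ℕ → ℕ := fun n => ⌈θ * n⌉₊
  set a : ℕ → ℝ := fun n =>
    (f (n + s n) / ((n + s n : ℕ) : ℝ) ^ (r + 1) * (((n + s n : ℕ) : ℝ) / n) ^ (r + 1)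
      - (L - θ * η / 4)) / (s n / n)
  have hs : Tendsto (fun n : ℕ => (s n : ℝ) / n) atTop (𝓝 θ) :=
    (tendsto_nat_ceil_mul_div_atTop hθ.le).comp tendsto_natCast_atTop_atTop
  have hns : Tendsto (fun n : ℕ => ((n + s n : ℕ) : ℝ) / n) atTop (𝓝 (1 + θ)) := by
    refine (hs.const_add 1).congr' ?_
    filter_upwards [eventually_gt_atTop 0] with n hn
    rw [Nat.cast_add, add_div, div_self (by positivity)]
  have hfs : Tendsto (fun n : ℕ => f (n + s n) / ((n + s n : ℕ) : ℝ) ^ (r + 1)) atTop (𝓝 L) :=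
    hf.comp (tendsto_atTop_mono (fun n => Nat.le_add_right n (s n)) tendsto_id)
  have ha : Tendsto a atTop (𝓝 ((L * (1 + θ) ^ (r + 1) - (L - θ * η / 4)) / θ)) :=
    ((hfs.mul (hns.pow (r + 1))).sub_const _).div hs hθ.ne'
  have hlimit : (L * (1 + θ) ^ (r + 1) - (L - θ * η / 4)) / θ < (r + 1) * L + η := by
    have : (L * (1 + θ) ^ (r + 1) - (L - θ * η / 4)) / θ
        = L * (θ⁻¹ * ((1 + θ) ^ (r + 1) - 1)) + η / 4 := by
      field_simp
      ring
    linarith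
  filter_upwards [ha.eventually (gt_mem_nhds hlimit), eventually_gt_atTop 0]
    with n han hn E d hE hEd
  have hnpos : (0 : ℝ) < n := by exact_mod_cast hn
  have hsn : (0 : ℝ) < s n := by
    have : 0 < θ * n := by positivity
    exact_mod_cast Nat.ceil_pos.2 this
  have hNn : (0 : ℝ) < ((n + s n : ℕ) : ℝ) := by positivity
  have hrewrite :
      a n * (n : ℝ) ^ r = (f (n + s n) - (L - θ * η / 4) * (n : ℝ) ^ (r + 1)) / s n := by
    simp only [a]
    rw [div_pow]
    field_simp
    ring
  calc d = (s n * d) / s n := by field_simp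
    _ ≤ (f (n + s n) - (L - θ * η / 4) * (n : ℝ) ^ (r + 1)) / s n := by
        gcongr
        linarith [hEd (s n)]
    _ = a n * (n : ℝ) ^ r := hrewrite.symm
    _ ≤ ((r + 1) * L + η) * (n : ℝ) ^ r := by gcongr

theorem Clonable.exists_card_link_le {𝔉 : Set (RGraph r)} (hc : Clonable 𝔉) {η : ℝ}
    (hη : 0 < η) :
    ∃ δ > 0, ∃ n0 : ℕ, ∀ F ∈ 𝔉, n0 ≤ F.n → (mDen 𝔉 - δ) * (F.n : ℝ) ^ r ≤ #F.edges →
      ∀ v < F.n, (#(link F v) : ℝ) ≤ (r * mDen 𝔉 + η) * (F.n : ℝ) ^ (r - 1) := by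
  obtain _ | r := r
  · refine ⟨1, one_pos, 0, fun F _ _ _ v hv => ?_⟩
    have h := sum_card_link F
    rw [zero_mul, sum_eq_zero_iff] at h
    simp [h v (mem_range.2 hv), hη.le]
  obtain ⟨δ, hδ, hev⟩ := exists_increment_le_of_tendsto_div_pow
    (hc.tendsto_mFam_div_pow r.succ_pos) hη
  obtain ⟨n0, hn0⟩ := eventually_atTop.1 hev
  refine ⟨δ, hδ, n0, fun F hF hn hE v hv => ?_⟩
  push_cast
  exact hn0 F.n hn _ _ hE fun s => by
    exact_mod_cast hc.card_add_mul_card_link_le_mFam hF hv s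

theorem exists_subset_abs_sub_le {ι : Type*} (s : Finset ι) (x : ι → ℝ) {a b c t : ℝ}
    (hb : 0 ≤ b) (hbt : b ≤ t) (ht : 0 < t) (hle : ∀ i ∈ s, x i ≤ a + b)
    (hsum : #s * (a - c) ≤ ∑ i ∈ s, x i) :
    ∃ X ⊆ s, #s - #s * (b + c) / t ≤ #X ∧ ∀ i ∈ X, |x i - a| ≤ t := by
  set X := s.filter fun i => a - t ≤ x i
  set B := s.filter fun i => ¬a - t ≤ x i
  have hcard : (#X : ℝ) + #B = #s := by exact_mod_cast card_filter_add_card_filter_not _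
  have hX : ∑ i ∈ X, x i ≤ #X * (a + b) := by
    simpa only [nsmul_eq_mul] using
      sum_le_card_nsmul X x _ fun i hi => hle i (mem_filter.1 hi).1
  have hB : ∑ i ∈ B, x i ≤ #B * (a - t) := by
    simpa only [nsmul_eq_mul] using
      sum_le_card_nsmul B x _ fun i hi => (not_le.1 (mem_filter.1 hi).2).le
  have hsplit := sum_filter_add_sum_filter_not s (fun i => a - t ≤ x i) x
  have hBt : (#B : ℝ) ≤ #s * (b + c) / t := by
    rw [le_div_iff₀ ht, ← hcard]
    rw [← hcard, ← hsplit] at hsum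
    nlinarith [mul_nonneg hb (Nat.cast_nonneg (α := ℝ) #B)]
  refine ⟨X, filter_subset _ _, ?_, fun i hi => abs_le.2 ⟨?_, ?_⟩⟩
  · linarith
  · linarith [(mem_filter.1 hi).2]
  · linarith [hle i (mem_filter.1 hi).1]

theorem exists_subset_abs_card_link_sub_le (F : RGraph r) {L δ η ε : ℝ} (hn : 0 < F.n)
    (hη : 0 ≤ η) (hηε : η ≤ ε) (hε : 0 < ε) (hE : (L - δ) * (F.n : ℝ) ^ r ≤ #F.edges)
    (hdeg : ∀ v < F.n, (#(link F v) : ℝ) ≤ (r * L + η) * (F.n : ℝ) ^ (r - 1)) :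
    ∃ X ⊆ range F.n, F.n - F.n * (η + r * δ) / ε ≤ #X ∧
      ∀ v ∈ X, |(#(link F v) : ℝ) - r * L * (F.n : ℝ) ^ (r - 1)| ≤ ε * (F.n : ℝ) ^ (r - 1) := by
  set n := F.n
  have hpow : (0 : ℝ) < (n : ℝ) ^ (r - 1) := by positivity
  have hnr : (r : ℝ) * (n * n ^ (r - 1)) = r * n ^ r := by
    rcases r with _ | r
    · simp
    · rw [Nat.add_sub_cancel, pow_succ, mul_comm (n : ℝ)]
  have hsum : (#(range n) : ℝ) * (r * L * n ^ (r - 1) - r * δ * n ^ (r - 1))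
      ≤ ∑ v ∈ range n, (#(link F v) : ℝ) := by
    rw [card_range, ← Nat.cast_sum, sum_card_link, Nat.cast_mul]
    calc (n : ℝ) * (r * L * n ^ (r - 1) - r * δ * n ^ (r - 1))
        = r * ((L - δ) * n ^ r) := by linear_combination (L - δ) * hnr
      _ ≤ r * #F.edges := by gcongr
  obtain ⟨X, hXs, hXcard, hX⟩ := exists_subset_abs_sub_le (range n) (fun v => (#(link F v) : ℝ))
    (b := η * n ^ (r - 1)) (t := ε * n ^ (r - 1)) (by positivity) (by gcongr) (by positivity)
    (fun v hv => (hdeg v (mem_range.1 hv)).trans_eq (by ring)) hsum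
  refine ⟨X, hXs, hXcard.trans' (le_of_eq ?_), hX⟩
  rw [card_range, ← add_mul, ← mul_assoc, mul_div_mul_right _ _ hpow.ne']

/-- degree lemma. For a clonable family `𝔉` and every `ε > 0` there are `δ > 0`
and `n0` such that every `F ∈ 𝔉` on `n ≥ n0` vertices with at least `(m(𝔉) - δ) n^r` edges has
a set `X` of at least `(1 - ε)n` vertices all of whose links have size within `ε n^{r-1}` of
`r·m(𝔉)·n^{r-1}`. -/
theorem degree_lemma {r : ℕ} (𝔉 : Set (RGraph r)) (hc : Clonable 𝔉) :
    ∀ ε > (0 : ℝ), ∃ δ > (0 : ℝ), ∃ n0 : ℕ, ∀ F ∈ 𝔉, n0 ≤ F.n →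
      (mDen 𝔉 - δ) * (F.n : ℝ) ^ r ≤ (F.edges.card : ℝ) →
      ∃ X : Finset ℕ, X ⊆ Finset.range F.n ∧ (1 - ε) * (F.n : ℝ) ≤ (X.card : ℝ) ∧
        ∀ v ∈ X,
          |((link F v).card : ℝ) - (r : ℝ) * mDen 𝔉 * (F.n : ℝ) ^ (r - 1)| ≤
            ε * (F.n : ℝ) ^ (r - 1) := by
  intro ε hε
  set η := min ε (ε ^ 2 / 2)
  obtain ⟨δ, hδ, n0, hdeg⟩ := hc.exists_card_link_le (η := η) (by positivity)
  set δ' := min δ (ε ^ 2 / (2 * (r + 1)))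
  refine ⟨δ', by positivity, max n0 1, fun F hF hn hE => ?_⟩
  obtain ⟨X, hXs, hXcard, hX⟩ := exists_subset_abs_card_link_sub_le F (by omega) (by positivity)
    (min_le_left _ _) hε hE
    (hdeg F hF (le_of_max_le_left hn) (hE.trans' (by gcongr; exact min_le_left _ _)))
  refine ⟨X, hXs, hXcard.trans' ?_, hX⟩
  have hrδ : r * δ' ≤ ε ^ 2 / 2 := by
    have := min_le_right δ (ε ^ 2 / (2 * (r + 1)))
    rw [le_div_iff₀ (by positivity)] at this
    nlinarith
  have hfrac : (η + r * δ') / ε ≤ ε := by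
    rw [div_le_iff₀ hε]
    nlinarith [min_le_right ε (ε ^ 2 / 2)]
  calc (1 - ε) * (F.n : ℝ) = F.n - F.n * ε := by ring
    _ ≤ F.n - F.n * ((η + r * δ') / ε) := by gcongr
    _ = F.n - F.n * (η + r * δ') / ε := by rw [mul_div_assoc]

end TuranGT
end
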